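/- Fix q ∈ (1, M+1). There exist constants C₁, C₂ > 0 such that for all sequences c, d ∈ 𝐔_q: C₁·ρ(c, d)^{log q} ≤ |π_q(c) − π_q(d)| ≤ C₂·ρ(c, d)^{log q}, where the logarithm is taken to base M+1. -/

import Mathlib

open scoped ENNReal NNReal Classical

namespace Expansions

/-- Digit sequences over the alphabet `{0,1,…,M}`; index `i : ℕ` represents the
`(i+1)`-st digit `d_{i+1}` of the paper. -/
abbrev Digits (M : ℕ) := ℕ → Fin (M + 1)

/-- `π_q((d_i)) = Σ_{i≥1} d_i / q^i`. -/
noncomputable def piQ (M : ℕ) (q : ℝ) (d : Digits M) : ℝ :=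
  ∑' i : ℕ, (d i : ℝ) / q ^ (i + 1)

/-- `𝒰_q` : the set of real numbers having a unique `q`-expansion. -/
def Uq (M : ℕ) (q : ℝ) : Set ℝ := {x | ∃! d : Digits M, piQ M q d = x}

/-- `𝐔_q` : the set of sequences that are the unique `q`-expansion of their value. -/
def UqSym (M : ℕ) (q : ℝ) : Set (Digits M) :=
  {d | ∀ e : Digits M, piQ M q e = piQ M q d → e = d}

/-- `𝒰(x)` : the set of univoque bases of `x`. -/
def Ubases (M : ℕ) (x : ℝ) : Set ℝ :=
  {q | q ∈ Set.Ioc (1 : ℝ) ((M : ℝ) + 1) ∧ x ∈ Uq M q}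

/-- `q_x = min{M+1, 1+M/x}`. -/
noncomputable def qx (M : ℕ) (x : ℝ) : ℝ := min ((M : ℝ) + 1) (1 + (M : ℝ) / x)

/-- Strict lexicographic order on digit sequences. -/
def lexLt {M : ℕ} (c d : Digits M) : Prop := ∃ n, (∀ i < n, c i = d i) ∧ c n < d n

def lexLe {M : ℕ} (c d : Digits M) : Prop := c = d ∨ lexLt c d

/-- The sequence ends with `0^∞`. -/
def EndsInZero {M : ℕ} (d : Digits M) : Prop := ∃ N, ∀ n ≥ N, d n = 0

/-- `d` is the quasi-greedy `q`-expansion of `x`: the lexicographically largest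
`q`-expansion of `x` not ending with `0^∞`. -/
def IsQuasiGreedy (M : ℕ) (q x : ℝ) (d : Digits M) : Prop :=
  piQ M q d = x ∧ ¬ EndsInZero d ∧
    ∀ e : Digits M, piQ M q e = x → ¬ EndsInZero e → lexLe e d

/-- `Φ_x(q)`: the quasi-greedy `q`-expansion of `x` (junk value if none exists). -/
noncomputable def Phi (M : ℕ) (x q : ℝ) : Digits M :=
  if h : ∃ d : Digits M, IsQuasiGreedy M q x d then h.choose else fun _ => 0

/-- `𝐔(x) = {Φ_x(q) : q ∈ 𝒰(x)}`. -/
def UxSym (M : ℕ) (x : ℝ) : Set (Digits M) := (Phi M x) '' (Ubases M x)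

/-- `ρ((c_i),(d_i)) = (M+1)^{-inf{i ≥ 1 : c_i ≠ d_i}}` (our index `n` represents the
`(n+1)`-st digit, whence the exponent `-(n+1)`); `ρ(c,c) = 0`. -/
noncomputable def rho (M : ℕ) (c d : Digits M) : ℝ :=
  if c = d then 0
  else ((M : ℝ) + 1) ^ (-(((sInf {i | c i ≠ d i} : ℕ) : ℤ) + 1))

/-- Diameter of a set with respect to a distance function, valued in `ℝ≥0∞`. -/
noncomputable def gdiam {X : Type*} (dist : X → X → ℝ) (A : Set X) : ℝ≥0∞ :=
  ⨆ x ∈ A, ⨆ y ∈ A, ENNReal.ofReal (dist x y)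

/-- The `s`-dimensional Hausdorff outer measure with respect to a distance function:
`lim_{δ→0⁺} inf {Σ diam(C n)^s : A ⊆ ⋃ C n, diam (C n) ≤ δ}`. -/
noncomputable def gHMeasure {X : Type*} (dist : X → X → ℝ) (s : ℝ) (A : Set X) : ℝ≥0∞ :=
  ⨆ (δ : ℝ) (_ : 0 < δ),
    ⨅ (C : ℕ → Set X) (_ : A ⊆ ⋃ n, C n)
      (_ : ∀ n, gdiam dist (C n) ≤ ENNReal.ofReal δ),
      ∑' n, gdiam dist (C n) ^ s

/-- Hausdorff dimension with respect to a distance function. -/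
noncomputable def gdimH {X : Type*} (dist : X → X → ℝ) (A : Set X) : ℝ≥0∞ :=
  ⨆ (s : ℝ≥0) (_ : gHMeasure dist (s : ℝ) A = ⊤), (s : ℝ≥0∞)

/-- The generalized golden ratio `q_G`. -/
noncomputable def qG (M : ℕ) : ℝ :=
  if M % 2 = 0 then ((M / 2 : ℕ) : ℝ) + 1
  else (((M / 2 : ℕ) : ℝ) + 1 +
    Real.sqrt (((M / 2 : ℕ) : ℝ) ^ 2 + 6 * ((M / 2 : ℕ) : ℝ) + 5)) / 2

/-- `x_G = M/(q_G - 1)`. -/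
noncomputable def xG (M : ℕ) : ℝ := (M : ℝ) / (qG M - 1)

/-- The Komornik–Loreti constant `q_KL = min 𝒰(1)`. -/
noncomputable def qKL (M : ℕ) : ℝ := sInf (Ubases M 1)

/-- `x_KL = M/(q_KL - 1)`. -/
noncomputable def xKL (M : ℕ) : ℝ := (M : ℝ) / (qKL M - 1)

/-- `X_iso`: the set of `x > 0` such that `𝒰(x)` contains an isolated point. -/
def Xiso (M : ℕ) : Set ℝ :=
  {x | 0 < x ∧ ∃ q ∈ Ubases M x, ∃ ε > 0, Ubases M x ∩ Set.Ioo (q - ε) (q + ε) = {q}}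

/-- The bifurcation set `𝒱 = {q ∈ (1,M+1] : 𝐔_r ≠ 𝐔_q for all r > q}`. -/
def Vset (M : ℕ) : Set ℝ :=
  {q | q ∈ Set.Ioc (1 : ℝ) ((M : ℝ) + 1) ∧
    ∀ r ∈ Set.Ioc (1 : ℝ) ((M : ℝ) + 1), q < r → UqSym M r ≠ UqSym M q}

/-- The Thue–Morse sequence `τ_i` = parity of the binary digit sum of `i`. -/
def tm (i : ℕ) : ℕ := (Nat.digits 2 i).sum % 2

/-!
If `c ≠ d` first differ at index `n`, then `π c - π d = (π (σⁿ c) - π (σⁿ d)) / qⁿ`, and the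
difference of the tails is at most `M / (q - 1)`. If `c` is a unique expansion, the tail after a
digit `< M` has value `< 1` and the tail after a digit `> 0` has value `> M / (q - 1) - 1`:
otherwise moving one unit between the first digit and the tail, and re-expanding the tail, gives
a second expansion. Hence unique tails with different first digits are at least
`(M / (q - 1) - 1) / q > 0` apart, which uses `q < M + 1`. Finally `ρ(c, d) ^ log_{M+1} q` is
exactly `q ^ (-(n + 1))`.
-/

section

variable {M : ℕ} {q : ℝ}

lemma div_pow_succ_eq_mul_inv_pow (a : ℝ) (i : ℕ) : a / q ^ (i + 1) = a / q * q⁻¹ ^ i := by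
  rw [pow_succ', inv_pow, ← div_eq_mul_inv, div_div]

lemma summable_div_pow_succ (hq : 1 < q) {f : ℕ → ℝ} {B : ℝ} (hf0 : ∀ i, 0 ≤ f i)
    (hfB : ∀ i, f i ≤ B) : Summable fun i : ℕ => f i / q ^ (i + 1) := by
  have hq0 : 0 < q := one_pos.trans hq
  refine .of_nonneg_of_le (fun i => by have := hf0 i; positivity) (fun i => ?_)
    ((summable_geometric_of_lt_one (by positivity) (inv_lt_one_of_one_lt₀ hq)).mul_left (B / q))
  rw [← div_pow_succ_eq_mul_inv_pow]
  gcongr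
  exact hfB i

lemma tsum_div_pow_succ (hq : 1 < q) (a : ℝ) :
    ∑' i : ℕ, a / q ^ (i + 1) = a / (q - 1) := by
  have hq0 : 0 < q := one_pos.trans hq
  have hq1 : q - 1 ≠ 0 := (sub_pos.2 hq).ne'
  simp_rw [div_pow_succ_eq_mul_inv_pow]
  rw [tsum_mul_left, tsum_geometric_of_lt_one (by positivity) (inv_lt_one_of_one_lt₀ hq)]
  field_simp

lemma summable_digits_div_pow_succ (hq : 1 < q) (d : Digits M) :
    Summable fun i : ℕ => (d i : ℝ) / q ^ (i + 1) :=
  summable_div_pow_succ hq (fun _ => Nat.cast_nonneg _) fun _ => Nat.cast_le.2 (Fin.is_le _)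

lemma piQ_nonneg (hq : 1 < q) (d : Digits M) : 0 ≤ piQ M q d :=
  tsum_nonneg fun _ => by have := one_pos.trans hq; positivity

lemma piQ_le (hq : 1 < q) (d : Digits M) : piQ M q d ≤ M / (q - 1) := by
  rw [← tsum_div_pow_succ hq]
  refine (summable_digits_div_pow_succ hq d).tsum_le_tsum (fun i => ?_)
    (summable_div_pow_succ hq (fun _ => Nat.cast_nonneg _) fun _ => le_rfl)
  have := one_pos.trans hq
  gcongr
  exact Nat.cast_le.2 (Fin.is_le _)

def dropDigits (n : ℕ) (d : Digits M) : Digits M := fun i => d (i + n)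

def replaceTail (n : ℕ) (p e : Digits M) : Digits M := fun i => if i < n then p i else e (i - n)

lemma dropDigits_replaceTail (n : ℕ) (p e : Digits M) : dropDigits n (replaceTail n p e) = e := by
  funext i
  simp [dropDigits, replaceTail]

lemma replaceTail_self_dropDigits (n : ℕ) (d : Digits M) :
    replaceTail n d (dropDigits n d) = d := by
  funext i
  by_cases hi : i < n
  · simp [replaceTail, hi]
  · simp [replaceTail, dropDigits, hi, Nat.sub_add_cancel (not_lt.1 hi)]

lemma piQ_eq_sum_add_piQ_dropDigits (hq : 1 < q) (d : Digits M) (n : ℕ) :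
    piQ M q d = ∑ i ∈ Finset.range n, (d i : ℝ) / q ^ (i + 1)
      + piQ M q (dropDigits n d) / q ^ n := by
  rw [piQ, ← (summable_digits_div_pow_succ hq d).sum_add_tsum_nat_add n, piQ, ← tsum_div_const]
  congr 2 with i
  rw [div_div, ← pow_add, add_right_comm]
  rfl

lemma piQ_replaceTail (hq : 1 < q) (n : ℕ) (p e : Digits M) :
    piQ M q (replaceTail n p e) = ∑ i ∈ Finset.range n, (p i : ℝ) / q ^ (i + 1)
      + piQ M q e / q ^ n := by
  rw [piQ_eq_sum_add_piQ_dropDigits hq _ n, dropDigits_replaceTail]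
  congr 1
  refine Finset.sum_congr rfl fun i hi => ?_
  simp [replaceTail, Finset.mem_range.1 hi]

noncomputable def greedyDigit (M : ℕ) (q r : ℝ) : Fin (M + 1) :=
  ⟨min M ⌊q * r⌋₊, Nat.lt_succ_of_le (min_le_left _ _)⟩

noncomputable def greedyRem (M : ℕ) (q y : ℝ) : ℕ → ℝ
  | 0 => y
  | n + 1 => q * greedyRem M q y n - greedyDigit M q (greedyRem M q y n)

noncomputable def greedyDigits (M : ℕ) (q y : ℝ) : Digits M :=
  fun n => greedyDigit M q (greedyRem M q y n)

lemma greedyStep_mem_Icc (hq : 1 < q) (hqM : q ≤ M + 1) {r : ℝ}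
    (hr : r ∈ Set.Icc 0 (M / (q - 1))) :
    q * r - greedyDigit M q r ∈ Set.Icc 0 (M / (q - 1)) := by
  obtain ⟨hr0, hr1⟩ := hr
  have hq1 : 0 < q - 1 := sub_pos.2 hq
  have hqr : 0 ≤ q * r := mul_nonneg (one_pos.trans hq).le hr0
  simp only [greedyDigit, Nat.cast_min]
  rcases le_total (⌊q * r⌋₊ : ℝ) M with h | h
  · rw [min_eq_right h]
    have hone : 1 ≤ (M : ℝ) / (q - 1) := by rw [le_div_iff₀ hq1]; linarith
    constructor <;> linarith [Nat.floor_le hqr, Nat.lt_floor_add_one (q * r)]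
  · rw [min_eq_left h]
    have hqM' : q * (M / (q - 1)) - M = M / (q - 1) := by field_simp; ring
    constructor <;> nlinarith [Nat.floor_le hqr]

lemma greedyRem_mem_Icc (hq : 1 < q) (hqM : q ≤ M + 1) {y : ℝ}
    (hy : y ∈ Set.Icc 0 (M / (q - 1))) (n : ℕ) :
    greedyRem M q y n ∈ Set.Icc 0 (M / (q - 1)) := by
  induction n with
  | zero => exact hy
  | succ n ih => exact greedyStep_mem_Icc hq hqM ih

lemma sum_greedyDigits_add_greedyRem (hq : 1 < q) (y : ℝ) (n : ℕ) :
    ∑ i ∈ Finset.range n, (greedyDigits M q y i : ℝ) / q ^ (i + 1) + greedyRem M q y n / q ^ n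
      = y := by
  have hq0 : q ≠ 0 := (one_pos.trans hq).ne'
  induction n with
  | zero => simp [greedyRem]
  | succ n ih =>
    refine Eq.trans ?_ ih
    rw [Finset.sum_range_succ, greedyRem, pow_succ]
    simp only [greedyDigits]
    field_simp
    ring

lemma exists_piQ_eq (hq : 1 < q) (hqM : q ≤ M + 1) {y : ℝ}
    (hy : y ∈ Set.Icc 0 (M / (q - 1))) : ∃ d : Digits M, piQ M q d = y := by
  refine ⟨greedyDigits M q y, tendsto_nhds_unique
    (summable_digits_div_pow_succ hq _).hasSum.tendsto_sum_nat ?_⟩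
  have hq0 : 0 < q := one_pos.trans hq
  have hrem : Filter.Tendsto (fun n => greedyRem M q y n / q ^ n) Filter.atTop (nhds 0) := by
    refine squeeze_zero (fun n => div_nonneg (greedyRem_mem_Icc hq hqM hy n).1 (by positivity))
      (fun n => ?_) (by simpa using (tendsto_pow_atTop_nhds_zero_of_lt_one (by positivity)
        (inv_lt_one_of_one_lt₀ hq)).const_mul (M / (q - 1)))
    rw [div_eq_mul_inv, ← inv_pow]
    gcongr
    exact (greedyRem_mem_Icc hq hqM hy n).2
  have hsum : (fun n => ∑ i ∈ Finset.range n, (greedyDigits M q y i : ℝ) / q ^ (i + 1))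
      = fun n => y - greedyRem M q y n / q ^ n :=
    funext fun n => eq_sub_of_add_eq (sum_greedyDigits_add_greedyRem hq y n)
  rw [hsum]
  simpa using (tendsto_const_nhds (x := y)).sub hrem

lemma dropDigits_mem_UqSym (hq : 1 < q) (n : ℕ) {c : Digits M} (hc : c ∈ UqSym M q) :
    dropDigits n c ∈ UqSym M q := by
  intro e he
  have hce : replaceTail n c e = c := hc _ <| by
    rw [piQ_replaceTail hq, he, ← piQ_replaceTail hq, replaceTail_self_dropDigits]
  rw [← hce, dropDigits_replaceTail]

lemma piQ_dropDigits_one_lt_one (hq : 1 < q) (hqM : q ≤ M + 1) {c : Digits M}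
    (hc : c ∈ UqSym M q) (hc0 : (c 0 : ℕ) < M) : piQ M q (dropDigits 1 c) < 1 := by
  by_contra! h
  obtain ⟨e, he⟩ := exists_piQ_eq hq hqM (y := piQ M q (dropDigits 1 c) - 1)
    ⟨by linarith, by linarith [piQ_le hq (dropDigits 1 c)]⟩
  have hce : replaceTail 1 (fun _ => ⟨c 0 + 1, by omega⟩) e = c := hc _ <| by
    rw [piQ_replaceTail hq, he, piQ_eq_sum_add_piQ_dropDigits hq c 1]
    simp only [Finset.range_one, Nat.cast_add, Nat.cast_one, Finset.sum_singleton, zero_add,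
      pow_one]
    ring
  have := congrArg (fun d : Digits M => (d 0 : ℕ)) hce
  simp [replaceTail] at this

lemma sub_one_lt_piQ_dropDigits_one (hq : 1 < q) (hqM : q ≤ M + 1) {c : Digits M}
    (hc : c ∈ UqSym M q) (hc0 : 0 < (c 0 : ℕ)) :
    M / (q - 1) - 1 < piQ M q (dropDigits 1 c) := by
  by_contra! h
  obtain ⟨e, he⟩ := exists_piQ_eq hq hqM (y := piQ M q (dropDigits 1 c) + 1)
    ⟨by linarith [piQ_nonneg hq (dropDigits 1 c)], by linarith⟩
  have hce : replaceTail 1 (fun _ => ⟨c 0 - 1, by omega⟩) e = c := hc _ <| by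
    rw [piQ_replaceTail hq, he, piQ_eq_sum_add_piQ_dropDigits hq c 1]
    simp only [Finset.range_one, Nat.cast_sub hc0, Nat.cast_one, Finset.sum_singleton, zero_add,
      pow_one]
    ring
  have := congrArg (fun d : Digits M => (d 0 : ℕ)) hce
  simp only [replaceTail, Order.lt_one_iff, ↓reduceIte] at this
  omega

lemma sub_le_piQ_sub_piQ_of_head_lt (hq : 1 < q) (hqM : q ≤ M + 1) {c d : Digits M}
    (hc : c ∈ UqSym M q) (hd : d ∈ UqSym M q) (hcd : c 0 < d 0) :
    (M / (q - 1) - 1) / q ≤ piQ M q d - piQ M q c := by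
  have hc' := piQ_dropDigits_one_lt_one hq hqM hc (hcd.trans_le (Fin.le_last _))
  have hd' := sub_one_lt_piQ_dropDigits_one hq hqM hd (Nat.zero_le _ |>.trans_lt hcd)
  have hdigit : (c 0 : ℝ) + 1 ≤ d 0 := by exact_mod_cast hcd
  rw [piQ_eq_sum_add_piQ_dropDigits hq c 1, piQ_eq_sum_add_piQ_dropDigits hq d 1]
  simp only [Finset.sum_range_one, zero_add, pow_one]
  rw [← add_div, ← add_div, ← sub_div]
  exact div_le_div_of_nonneg_right (by linarith) (one_pos.trans hq).le

lemma piQ_sub_piQ_eq_of_forall_lt_eq (hq : 1 < q) {c d : Digits M} {n : ℕ}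
    (h : ∀ i < n, c i = d i) :
    piQ M q c - piQ M q d = (piQ M q (dropDigits n c) - piQ M q (dropDigits n d)) / q ^ n := by
  rw [piQ_eq_sum_add_piQ_dropDigits hq c n, piQ_eq_sum_add_piQ_dropDigits hq d n,
    Finset.sum_congr rfl fun i hi => by rw [h i (Finset.mem_range.1 hi)]]
  ring

lemma abs_piQ_sub_piQ_le (hq : 1 < q) {c d : Digits M} {n : ℕ} (h : ∀ i < n, c i = d i) :
    |piQ M q c - piQ M q d| ≤ q * (M / (q - 1)) / q ^ (n + 1) := by
  have hq0 : 0 < q := one_pos.trans hq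
  rw [piQ_sub_piQ_eq_of_forall_lt_eq hq h, abs_div, abs_of_pos (pow_pos hq0 n), pow_succ',
    mul_div_mul_left _ _ hq0.ne']
  gcongr
  rw [abs_sub_le_iff]
  constructor <;> linarith [piQ_nonneg hq (dropDigits n c), piQ_nonneg hq (dropDigits n d),
    piQ_le hq (dropDigits n c), piQ_le hq (dropDigits n d)]

lemma le_abs_piQ_sub_piQ (hq : 1 < q) (hqM : q ≤ M + 1) {c d : Digits M}
    (hc : c ∈ UqSym M q) (hd : d ∈ UqSym M q) {n : ℕ} (h : ∀ i < n, c i = d i)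
    (hn : c n ≠ d n) :
    (M / (q - 1) - 1) / q ^ (n + 1) ≤ |piQ M q c - piQ M q d| := by
  have hq0 : 0 < q := one_pos.trans hq
  have hc' := dropDigits_mem_UqSym hq n hc
  have hd' := dropDigits_mem_UqSym hq n hd
  have hgap : (M / (q - 1) - 1) / q ≤ |piQ M q (dropDigits n c) - piQ M q (dropDigits n d)| := by
    rcases hn.lt_or_gt with hlt | hlt
    · rw [abs_sub_comm]
      exact (sub_le_piQ_sub_piQ_of_head_lt hq hqM hc' hd' (by simpa [dropDigits] using hlt)).trans
        (le_abs_self _)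
    · exact (sub_le_piQ_sub_piQ_of_head_lt hq hqM hd' hc' (by simpa [dropDigits] using hlt)).trans
        (le_abs_self _)
  rw [piQ_sub_piQ_eq_of_forall_lt_eq hq h, abs_div, abs_of_pos (pow_pos hq0 n), pow_succ',
    ← div_div]
  gcongr

lemma rho_rpow_logb (hM : 1 < (M : ℝ) + 1) (hq : 0 < q) {c d : Digits M} (hcd : c ≠ d) :
    rho M c d ^ Real.logb ((M : ℝ) + 1) q = 1 / q ^ (sInf {i | c i ≠ d i} + 1) := by
  rw [rho, if_neg hcd, ← Real.rpow_intCast, ← Real.rpow_mul (by positivity), mul_comm,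
    Real.rpow_mul (by positivity), Real.rpow_logb (by positivity) hM.ne' hq, Real.rpow_intCast,
    zpow_neg, one_div]
  norm_cast

end

theorem piQ_biHolder_on_UqSym_general (M : ℕ) (q : ℝ)
    (hq : q ∈ Set.Ioo (1 : ℝ) ((M : ℝ) + 1)) :
    ∃ C₁ > (0 : ℝ), ∃ C₂ > (0 : ℝ),
      ∀ c ∈ UqSym M q, ∀ d ∈ UqSym M q,
        C₁ * rho M c d ^ Real.logb ((M : ℝ) + 1) q ≤ |piQ M q c - piQ M q d| ∧
        |piQ M q c - piQ M q d| ≤ C₂ * rho M c d ^ Real.logb ((M : ℝ) + 1) q := by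
  obtain ⟨hq1, hqM⟩ := hq
  have hq0 : 0 < q := one_pos.trans hq1
  have hC₁ : 0 < M / (q - 1) - 1 := by
    rw [sub_pos, one_lt_div (sub_pos.2 hq1)]
    linarith
  refine ⟨_, hC₁, q * (M / (q - 1)), mul_pos hq0 (by linarith), fun c hc d hd => ?_⟩
  by_cases hcd : c = d
  · subst hcd
    simp [rho, Real.zero_rpow (Real.logb_pos (hq1.trans hqM) hq1).ne']
  obtain ⟨hne, hagree⟩ : c (sInf {i | c i ≠ d i}) ≠ d (sInf {i | c i ≠ d i}) ∧
      ∀ i < sInf {i | c i ≠ d i}, c i = d i :=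
    ⟨Nat.sInf_mem (Function.ne_iff.1 hcd), fun i hi => not_not.1 (Nat.notMem_of_lt_sInf hi)⟩
  rw [rho_rpow_logb (hq1.trans hqM) hq0 hcd, mul_one_div, mul_one_div]
  exact ⟨le_abs_piQ_sub_piQ hq1 hqM.le hc hd hagree hne, abs_piQ_sub_piQ_le hq1 hagree⟩

/-- Lemma: for fixed `q ∈ (1, M+1)` there are constants `C₁, C₂ > 0` such that for all
`c, d ∈ 𝐔_q`, `C₁ ρ(c,d)^{log q} ≤ |π_q(c) - π_q(d)| ≤ C₂ ρ(c,d)^{log q}`, with the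
logarithm taken to base `M+1`. -/
theorem piQ_biHolder_on_UqSym (M : ℕ) (hM : 0 < M) (q : ℝ)
    (hq : q ∈ Set.Ioo (1 : ℝ) ((M : ℝ) + 1)) :
    ∃ C₁ > (0 : ℝ), ∃ C₂ > (0 : ℝ),
      ∀ c ∈ UqSym M q, ∀ d ∈ UqSym M q,
        C₁ * rho M c d ^ Real.logb ((M : ℝ) + 1) q ≤ |piQ M q c - piQ M q d| ∧
        |piQ M q c - piQ M q d| ≤ C₂ * rho M c d ^ Real.logb ((M : ℝ) + 1) q :=
  piQ_biHolder_on_UqSym_general M q hq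

end Expansions
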